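/- For all i, j ∈ {1,…,4}, the horizontal covariant trace of the vertical d-tensor vanishes: Σ_{m=1}^{4} C_{i(1)|m}^{j(m)} = 0, where C_{i(1)|l}^{j(k)} := δC_{i(1)}^{j(k)}/δx^l + Σ_{r=1}^{4} [ C_{i(1)}^{r(k)} H^j_{rl} − C_{r(1)}^{j(k)} H^r_{il} + C_{i(1)}^{j(r)} H^k_{rl} ], with δ/δx^l := ∂/∂x^l + 4σ_l(x) p_l ∂/∂p_l (no summation over l) and H^i_{jk} := 4 δ^i_j δ^i_k σ_i(x). -/

import Mathlib

/-- Partial derivative of `f : (Fin 4 → ℝ) → ℝ` with respect to the `i`-th coordinate. -/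
noncomputable def pd (f : (Fin 4 → ℝ) → ℝ) (i : Fin 4) (v : Fin 4 → ℝ) : ℝ :=
  deriv (fun s => f (Function.update v i s)) (v i)

/-- Kronecker delta. -/
noncomputable def kron (i j : Fin 4) : ℝ := if i = j then 1 else 0

/-- `𝖢_i^{jk} = (1 − 2δ^{jk} − 2δ^j_i − 2δ^k_i + 8δ^j_i δ^k_i)/8`. -/
noncomputable def CC (i j k : Fin 4) : ℝ :=
  (1 - 2 * kron j k - 2 * kron i j - 2 * kron i k + 8 * kron i j * kron i k) / 8

/-- The vertical d-tensor `C_{i(1)}^{j(k)} = 𝖢_i^{jk} p_i/(p_j p_k)`. -/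
noncomputable def Cv (p : Fin 4 → ℝ) (i j k : Fin 4) : ℝ :=
  CC i j k * p i / (p j * p k)

/-- The Cartan coefficient `H^i_{jk} = 4 δ^i_j δ^i_k σ_i(x)`. -/
noncomputable def Hh (σ : (Fin 4 → ℝ) → ℝ) (x : Fin 4 → ℝ) (i j k : Fin 4) : ℝ :=
  4 * kron i j * kron i k * pd σ i x

/-- The horizontal covariant derivative
`C_{i(1)|l}^{j(k)} = δC_{i(1)}^{j(k)}/δx^l
+ Σ_r [C_{i(1)}^{r(k)} H^j_{rl} − C_{r(1)}^{j(k)} H^r_{il} + C_{i(1)}^{j(r)} H^k_{rl}]`,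
where `δ/δx^l = ∂/∂x^l + 4σ_l(x) p_l ∂/∂p_l`. -/
noncomputable def covC (σ : (Fin 4 → ℝ) → ℝ) (x p : Fin 4 → ℝ) (i j k l : Fin 4) : ℝ :=
  (pd (fun x' => Cv p i j k) l x + 4 * pd σ l x * p l * pd (fun p' => Cv p' i j k) l p)
    + ∑ r, (Cv p i r k * Hh σ x j r l - Cv p r j k * Hh σ x r i l + Cv p i j r * Hh σ x k r l)

lemma pd_Cv (p : Fin 4 → ℝ) (hp : ∀ i, 0 < p i) (i j k l : Fin 4) :
    pd (fun p' => Cv p' i j k) l p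
      = CC i j k * ((kron i l * (p j * p k) - p i * (kron j l * p k + p j * kron k l))
          / (p j * p k) ^ 2) := by
  have hupd : ∀ a : Fin 4, ∀ s : ℝ, Function.update p l s a = p a + kron a l * (s - p l) := by
    intro a s
    rcases eq_or_ne a l with h | h
    · subst h; simp [kron]
    · simp [kron, h, Function.update_of_ne h]
  have hfun : (fun s => Cv (Function.update p l s) i j k)
      = fun s => CC i j k * ((p i + kron i l * (s - p l)) /
          ((p j + kron j l * (s - p l)) * (p k + kron k l * (s - p l)))) := by
    funext s
    simp only [Cv, hupd, mul_div_assoc]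
  have hN : HasDerivAt (fun s : ℝ => p i + kron i l * (s - p l)) (kron i l) (p l) := by
    simpa using (((hasDerivAt_id (p l)).sub_const (p l)).const_mul (kron i l)).const_add (p i)
  have hB : HasDerivAt (fun s : ℝ => p j + kron j l * (s - p l)) (kron j l) (p l) := by
    simpa using (((hasDerivAt_id (p l)).sub_const (p l)).const_mul (kron j l)).const_add (p j)
  have hK : HasDerivAt (fun s : ℝ => p k + kron k l * (s - p l)) (kron k l) (p l) := by
    simpa using (((hasDerivAt_id (p l)).sub_const (p l)).const_mul (kron k l)).const_add (p k)
  have hD : HasDerivAt (fun s : ℝ => (p j + kron j l * (s - p l)) * (p k + kron k l * (s - p l)))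
      (kron j l * p k + p j * kron k l) (p l) := by
    have h := hB.mul hK
    simp only [sub_self, mul_zero, add_zero] at h
    exact h
  have hne : (p j + kron j l * (p l - p l)) * (p k + kron k l * (p l - p l)) ≠ 0 := by
    simpa using (mul_pos (hp j) (hp k)).ne'
  have hdiv := hN.div hD hne
  have final := hdiv.const_mul (CC i j k)
  rw [pd, hfun]
  refine final.deriv.trans ?_
  simp

/-- the horizontal covariant trace of the vertical d-tensor vanishes:
`Σ_m C_{i(1)|m}^{j(m)} = 0`. -/
theorem stmt_7 (σ : (Fin 4 → ℝ) → ℝ) (hσ : ContDiff ℝ (⊤ : ℕ∞) σ)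
    (x p : Fin 4 → ℝ) (hp : ∀ i, 0 < p i) (i j : Fin 4) :
    ∑ m, covC σ x p i j m m = 0 := by
  have key : ∀ m, covC σ x p i j m m = 0 := by
    intro m
    have hpi := (hp i).ne'
    have hpj := (hp j).ne'
    have hpm := (hp m).ne'
    have h0 : pd (fun _ => Cv p i j m) m x = 0 := by simp [pd]
    have s1 : ∑ r, Cv p i r m * Hh σ x j r m = Cv p i j m * (4 * kron j m * pd σ j x) := by
      rw [Fintype.sum_eq_single j]
      · simp [Hh, kron]; try ring
      · intro r hr
        simp [Hh, kron, Ne.symm hr]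
    have s2 : ∑ r, Cv p r j m * Hh σ x r i m = Cv p i j m * (4 * kron i m * pd σ i x) := by
      rw [Fintype.sum_eq_single i]
      · simp [Hh, kron]; try ring
      · intro r hr
        simp [Hh, kron, hr]
    have s3 : ∑ r, Cv p i j r * Hh σ x m r m = Cv p i j m * (4 * pd σ m x) := by
      rw [Fintype.sum_eq_single m]
      · simp [Hh, kron]; try ring
      · intro r hr
        simp [Hh, kron, Ne.symm hr]
    rw [covC, h0, pd_Cv p hp i j m m, Finset.sum_add_distrib, Finset.sum_sub_distrib,
      s1, s2, s3]
    rcases eq_or_ne i m with hi | hi <;> rcases eq_or_ne j m with hj | hj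
    · subst hi; subst hj
      simp only [Cv, kron, if_pos rfl]
      field_simp
      simp only [↓reduceIte]
      ring
    · subst hi
      simp only [Cv, kron, if_pos rfl, if_neg hj]
      field_simp
      simp only [↓reduceIte]
      ring
    · subst hj
      simp only [Cv, kron, if_pos rfl, if_neg hi]
      field_simp
      simp only [↓reduceIte]
      ring
    · simp only [Cv, kron, if_pos rfl, if_neg hi, if_neg hj]
      field_simp
      simp only [↓reduceIte]
      ring
  simp [key]
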